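/- Let Φ=(f_1,…,f_n) be a polynomial automorphism of K^n, with deg_1 the standard homogeneous degree. If P ∈ K[x_1,…,x_n] satisfies deg_1(P∘Φ) = 1, then either P is affine (i.e. deg_1(P) ≤ 1) or P̃ belongs to the ideal of relations I. -/

import Mathlib

/-!
Give the variable `x_i` the weight `deg f_i`. Under `Φ` a monomial `x^d` of weighted degree `D`
becomes a polynomial of degree at most `D` whose degree-`D` part is `∏ f̄_i ^ d_i`. Hence the
degree-`D` part of `P ∘ Φ`, for `D = deg₂ P`, is `P̃(f̄_1, …, f̄_n)`. If `P̃ ∉ I` this is nonzero,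
so `D ≤ deg₁ (P ∘ Φ) = 1`; as the components of an automorphism are nonconstant,
`deg₁ P ≤ deg₂ P ≤ 1`.
-/

open MvPolynomial

/-- Leading term of a polynomial with respect to the standard homogeneous degree. -/
noncomputable def ltStd {K : Type*} [CommSemiring K] {n : ℕ}
    (p : MvPolynomial (Fin n) K) : MvPolynomial (Fin n) K :=
  homogeneousComponent p.totalDegree p

/-- Leading term of a polynomial with respect to the weighted homogeneous degree
with weights `w`. -/
noncomputable def ldt {K : Type*} [CommSemiring K] {n : ℕ} (w : Fin n → ℕ)
    (p : MvPolynomial (Fin n) K) : MvPolynomial (Fin n) K :=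
  weightedHomogeneousComponent w (weightedTotalDegree w p) p

/-- The ideal of relations between the leading terms (for the standard degree) of the
components of an automorphism. -/
noncomputable def relIdealStd {K : Type*} [CommRing K] {n : ℕ}
    (f : Fin n → MvPolynomial (Fin n) K) : Ideal (MvPolynomial (Fin n) K) :=
  RingHom.ker
    (aeval (fun i => ltStd (f i)) : MvPolynomial (Fin n) K →ₐ[K] MvPolynomial (Fin n) K)

namespace MvPolynomial

variable {R σ τ : Type*} [CommSemiring R]

theorem homogeneousComponent_add_mul {p q : MvPolynomial σ R} {a b : ℕ}
    (hp : p.totalDegree ≤ a) (hq : q.totalDegree ≤ b) :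
    homogeneousComponent (a + b) (p * q) =
      homogeneousComponent a p * homogeneousComponent b q := by
  classical
  ext d
  rw [coeff_homogeneousComponent]
  split_ifs with hd
  · rw [coeff_mul, coeff_mul]
    refine Finset.sum_congr rfl fun uv huv => ?_
    have hdeg : uv.1.degree + uv.2.degree = a + b := by
      rw [← hd, ← map_add, Finset.HasAntidiagonal.mem_antidiagonal.mp huv]
    rw [coeff_homogeneousComponent, coeff_homogeneousComponent]
    by_cases hu : uv.1.degree = a
    · rw [if_pos hu, if_pos (by omega)]
    · rw [if_neg hu, zero_mul]
      rcases Nat.lt_or_gt_of_ne hu with hlt | hgt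
      · rw [coeff_eq_zero_of_totalDegree_lt (by omega : q.totalDegree < uv.2.degree), mul_zero]
      · rw [coeff_eq_zero_of_totalDegree_lt (by omega : p.totalDegree < uv.1.degree), zero_mul]
  · exact (((homogeneousComponent_isHomogeneous a p).mul
      (homogeneousComponent_isHomogeneous b q)).coeff_eq_zero hd).symm

theorem homogeneousComponent_sum_prod {ι : Type*} (s : Finset ι) (g : ι → MvPolynomial σ R)
    (a : ι → ℕ) (h : ∀ i ∈ s, (g i).totalDegree ≤ a i) :
    homogeneousComponent (∑ i ∈ s, a i) (∏ i ∈ s, g i) =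
      ∏ i ∈ s, homogeneousComponent (a i) (g i) := by
  induction s using Finset.cons_induction with
  | empty => simp
  | cons i s hi ih =>
    have hs : ∀ j ∈ s, (g j).totalDegree ≤ a j := fun j hj => h j (Finset.mem_cons_of_mem hj)
    rw [Finset.prod_cons, Finset.sum_cons, Finset.prod_cons, ← ih hs,
      homogeneousComponent_add_mul (h i (Finset.mem_cons_self i s))
        ((totalDegree_finsetProd s g).trans (Finset.sum_le_sum hs))]

theorem homogeneousComponent_pow {p : MvPolynomial σ R} {a : ℕ} (hp : p.totalDegree ≤ a)
    (k : ℕ) : homogeneousComponent (k * a) (p ^ k) = homogeneousComponent a p ^ k := by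
  simpa using homogeneousComponent_sum_prod (Finset.range k) (fun _ => p) (fun _ => a)
    (fun _ _ => hp)

section Substitution

variable (f : σ → MvPolynomial τ R)

theorem totalDegree_prod_pow_le_weight (d : σ →₀ ℕ) :
    (d.prod fun i k => f i ^ k).totalDegree ≤ d.weight fun i => (f i).totalDegree := by
  rw [Finsupp.weight_apply, Finsupp.sum, Finsupp.prod]
  exact (totalDegree_finsetProd _ _).trans
    (Finset.sum_le_sum fun i _ => totalDegree_pow (f i) (d i))

theorem homogeneousComponent_weight_prod_pow (d : σ →₀ ℕ) :
    homogeneousComponent (d.weight fun i => (f i).totalDegree) (d.prod fun i k => f i ^ k) =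
      d.prod fun i k => homogeneousComponent (f i).totalDegree (f i) ^ k := by
  rw [Finsupp.weight_apply, Finsupp.sum, Finsupp.prod, Finsupp.prod]
  simp only [smul_eq_mul]
  rw [homogeneousComponent_sum_prod _ _ _ fun i _ => totalDegree_pow (f i) (d i)]
  exact Finset.prod_congr rfl fun i _ => homogeneousComponent_pow le_rfl (d i)

theorem homogeneousComponent_weightedTotalDegree_aeval (P : MvPolynomial σ R) :
    homogeneousComponent (weightedTotalDegree (fun i => (f i).totalDegree) P) (aeval f P) =
      aeval (fun i => homogeneousComponent (f i).totalDegree (f i))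
        (weightedHomogeneousComponent (fun i => (f i).totalDegree)
          (weightedTotalDegree (fun i => (f i).totalDegree) P) P) := by
  set w : σ → ℕ := fun i => (f i).totalDegree
  conv_lhs => enter [2]; rw [P.as_sum]
  rw [weightedHomogeneousComponent_apply, Finset.sum_filter, map_sum, map_sum, map_sum]
  refine Finset.sum_congr rfl fun d hd => ?_
  rw [aeval_monomial, algebraMap_eq, homogeneousComponent_C_mul]
  split_ifs with hwd
  · rw [aeval_monomial, algebraMap_eq, ← hwd, homogeneousComponent_weight_prod_pow]
  · rw [map_zero, homogeneousComponent_eq_zero _ _ ((totalDegree_prod_pow_le_weight f d).trans_lt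
      (lt_of_le_of_ne (le_weightedTotalDegree w hd) hwd)), mul_zero]

end Substitution

theorem weightedTotalDegree_mono {w w' : σ → ℕ} (h : w ≤ w') (P : MvPolynomial σ R) :
    weightedTotalDegree w P ≤ weightedTotalDegree w' P :=
  Finset.sup_mono_fun fun d _ => by
    simp only [Finsupp.weight_apply, Finsupp.sum, smul_eq_mul]
    exact Finset.sum_le_sum fun i _ => Nat.mul_le_mul_left _ (h i)

theorem totalDegree_le_weightedTotalDegree {w : σ → ℕ} (hw : ∀ i, w i ≠ 0)
    (P : MvPolynomial σ R) : P.totalDegree ≤ weightedTotalDegree w P :=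
  weightedTotalDegree_one P ▸
    weightedTotalDegree_mono (fun i => Nat.one_le_iff_ne_zero.mpr (hw i)) P

theorem totalDegree_ne_zero_of_injective_aeval [Nontrivial R] {f : σ → MvPolynomial σ R}
    (hf : Function.Injective (aeval f : MvPolynomial σ R →ₐ[R] MvPolynomial σ R)) (i : σ) :
    (f i).totalDegree ≠ 0 := by
  intro h
  obtain ⟨c, hc⟩ : ∃ c, f i = C c := ⟨_, totalDegree_eq_zero_iff_eq_C.mp h⟩
  have hX : X i = (C c : MvPolynomial σ R) := hf (by rw [aeval_X, aeval_C, hc, algebraMap_eq])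
  simpa using congrArg totalDegree hX

end MvPolynomial

theorem stmt8_general {K : Type*} [Field K]
    {n : ℕ} (f : Fin n → MvPolynomial (Fin n) K)
    (hf : Function.Bijective
      ⇑(aeval f : MvPolynomial (Fin n) K →ₐ[K] MvPolynomial (Fin n) K))
    (P : MvPolynomial (Fin n) K)
    (hP : (aeval f P).totalDegree = 1) :
    P.totalDegree ≤ 1 ∨ ldt (fun i => (f i).totalDegree) P ∈ relIdealStd f := by
  by_cases hI : ldt (fun i => (f i).totalDegree) P ∈ relIdealStd f
  · exact Or.inr hI
  refine Or.inl ((totalDegree_le_weightedTotalDegree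
    (totalDegree_ne_zero_of_injective_aeval hf.injective) P).trans ?_)
  by_contra! hD
  exact hI <| RingHom.mem_ker.mpr <| (homogeneousComponent_weightedTotalDegree_aeval f P).symm.trans
    (homogeneousComponent_eq_zero _ _ (hP ▸ hD))

/-- Corollary: if `deg₁(P∘Φ) = 1` then either `P` is affine or its `deg₂`-leading term
lies in the ideal of relations. -/
theorem stmt8 {K : Type*} [Field K] [IsAlgClosed K] [CharZero K]
    {n : ℕ} (f : Fin n → MvPolynomial (Fin n) K)
    (hf : Function.Bijective
      ⇑(aeval f : MvPolynomial (Fin n) K →ₐ[K] MvPolynomial (Fin n) K))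
    (P : MvPolynomial (Fin n) K)
    (hP : (aeval f P).totalDegree = 1) :
    P.totalDegree ≤ 1 ∨ ldt (fun i => (f i).totalDegree) P ∈ relIdealStd f :=
  stmt8_general f hf P hP
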